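/- arXiv:2510.12311 — 3 statements merged into one kernel-verified Lean document; each statement's English description precedes it below -/
import Mathlib

section
/- Let M, N ≥ 1 be integers and let φ_1, …, φ_M : ℝ^{d_θ} × ℝ^{d_x} → ℝ each be μ-strongly convex on ℝ^{d_θ} × ℝ^{d_x} (jointly in both arguments), for some μ > 0. Define Φ : ℝ^{d_θ} × (ℝ^{d_x})^{M×N} → ℝ by Φ(θ, z^{1:M,1:N}) = Σ_{m=1}^M Σ_{n=1}^N φ_m(θ, √(MN)·z^{m,n}). Then Φ is (MNμ)-strongly convex on ℝ^{d_θ} × (ℝ^{d_x})^{M×N}. -/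
/-!
Write `L_{m,n} q = (θ, √(MN) z^{m,n})`, a linear map. Since the θ-block appears in all `MN`
terms and each `z^{m,n}` in one term scaled by `√(MN)`, `Σ_{m,n} ‖L_{m,n} q‖² = MN ‖q‖²`.
Hence `Φ(q) - (MNμ/2)‖q‖² = Σ_{m,n} (φ_m - (μ/2)‖·‖²)(L_{m,n} q)`, a sum of convex functions
composed with linear maps.
-/

open Real

/-- Embed a pair (θ, x) into the Euclidean space indexed by the sum type,
carrying the Euclidean norm ‖(θ,x)‖² = ‖θ‖² + ‖x‖². -/
noncomputable def sumPair {dθ dx : ℕ} (θ : EuclideanSpace ℝ (Fin dθ))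
    (x : EuclideanSpace ℝ (Fin dx)) : EuclideanSpace ℝ (Fin dθ ⊕ Fin dx) :=
  (WithLp.equiv 2 _).symm (Sum.elim (fun i => θ i) (fun j => x j))

/-- Extract the θ-component of a point of ℝ^{d_θ} × (ℝ^{d_x})^{M×N}. -/
noncomputable def thetaPart {dθ dx M N : ℕ}
    (q : EuclideanSpace ℝ (Fin dθ ⊕ (Fin M × Fin N) × Fin dx)) :
    EuclideanSpace ℝ (Fin dθ) :=
  (WithLp.equiv 2 _).symm (fun i => q (Sum.inl i))

/-- Extract the (m,n)-th latent block z^{m,n} ∈ ℝ^{d_x}. -/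
noncomputable def zPart {dθ dx M N : ℕ}
    (q : EuclideanSpace ℝ (Fin dθ ⊕ (Fin M × Fin N) × Fin dx)) (m : Fin M) (n : Fin N) :
    EuclideanSpace ℝ (Fin dx) :=
  (WithLp.equiv 2 _).symm (fun j => q (Sum.inr ((m, n), j)))

/-- Φ(θ, z^{1:M,1:N}) = Σ_m Σ_n φ_m(θ, √(MN) z^{m,n}). -/
noncomputable def bigPhi {dθ dx M N : ℕ}
    (φ : Fin M → EuclideanSpace ℝ (Fin dθ ⊕ Fin dx) → ℝ)
    (q : EuclideanSpace ℝ (Fin dθ ⊕ (Fin M × Fin N) × Fin dx)) : ℝ :=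
  ∑ m : Fin M, ∑ n : Fin N,
    φ m (sumPair (thetaPart q) (Real.sqrt (M * N) • zPart q m n))

open Finset

theorem ConvexOn.sum {𝕜 E β ι : Type*} [Semiring 𝕜] [PartialOrder 𝕜] [AddCommMonoid E]
    [AddCommMonoid β] [PartialOrder β] [IsOrderedAddMonoid β] [SMul 𝕜 E] [Module 𝕜 β]
    {s : Set E} {t : Finset ι} {f : ι → E → β} (hs : Convex 𝕜 s)
    (hf : ∀ i ∈ t, ConvexOn 𝕜 s (f i)) : ConvexOn 𝕜 s (fun x => ∑ i ∈ t, f i x) :=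
  sum_fn t f ▸ sum_induction _ (ConvexOn 𝕜 s) (fun _ _ => ConvexOn.add) (convexOn_const 0 hs) hf

section Blocks

variable {dθ dx M N : ℕ}

theorem norm_sq_sumPair (θ : EuclideanSpace ℝ (Fin dθ)) (x : EuclideanSpace ℝ (Fin dx)) :
    ‖sumPair θ x‖ ^ 2 = ‖θ‖ ^ 2 + ‖x‖ ^ 2 := by
  simp [EuclideanSpace.real_norm_sq_eq, sumPair, Fintype.sum_sum_type]

theorem norm_sq_eq_thetaPart_add_zPart (q : EuclideanSpace ℝ (Fin dθ ⊕ (Fin M × Fin N) × Fin dx)) :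
    ‖q‖ ^ 2 = ‖thetaPart q‖ ^ 2 + ∑ m, ∑ n, ‖zPart q m n‖ ^ 2 := by
  simp [EuclideanSpace.real_norm_sq_eq, thetaPart, zPart, Fintype.sum_sum_type,
    Fintype.sum_prod_type]

noncomputable def blockMap (c : ℝ) (m : Fin M) (n : Fin N) :
    EuclideanSpace ℝ (Fin dθ ⊕ (Fin M × Fin N) × Fin dx) →ₗ[ℝ]
      EuclideanSpace ℝ (Fin dθ ⊕ Fin dx) where
  toFun q := sumPair (thetaPart q) (c • zPart q m n)
  map_add' p q := by
    ext (i | j) <;> simp [sumPair, thetaPart, zPart, mul_add]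
  map_smul' r q := by
    ext (i | j) <;> simp [sumPair, thetaPart, zPart, mul_left_comm]

theorem blockMap_apply (c : ℝ) (m : Fin M) (n : Fin N)
    (q : EuclideanSpace ℝ (Fin dθ ⊕ (Fin M × Fin N) × Fin dx)) :
    blockMap c m n q = sumPair (thetaPart q) (c • zPart q m n) :=
  rfl

theorem sum_norm_sq_blockMap_sqrt (q : EuclideanSpace ℝ (Fin dθ ⊕ (Fin M × Fin N) × Fin dx)) :
    ∑ m, ∑ n, ‖blockMap (√(M * N)) m n q‖ ^ 2 = M * N * ‖q‖ ^ 2 := by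
  have hc : √((M : ℝ) * N) ^ 2 = M * N := Real.sq_sqrt (by positivity)
  simp only [blockMap_apply, norm_sq_sumPair, norm_smul, mul_pow, Real.norm_eq_abs, sq_abs, hc,
    sum_add_distrib, sum_const, card_univ, Fintype.card_fin, nsmul_eq_mul, ← mul_sum,
    norm_sq_eq_thetaPart_add_zPart q]
  ring

theorem bigPhi_sub_eq_sum_blockMap (φ : Fin M → EuclideanSpace ℝ (Fin dθ ⊕ Fin dx) → ℝ) (μ : ℝ)
    (q : EuclideanSpace ℝ (Fin dθ ⊕ (Fin M × Fin N) × Fin dx)) :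
    bigPhi φ q - M * N * μ / 2 * ‖q‖ ^ 2 =
      ∑ m, ∑ n, (φ m (blockMap (√(M * N)) m n q) - μ / 2 * ‖blockMap (√(M * N)) m n q‖ ^ 2) := by
  simp only [sum_sub_distrib, ← mul_sum, sum_norm_sq_blockMap_sqrt]
  unfold bigPhi
  simp only [blockMap_apply]
  ring

end Blocks

theorem stmt0_general (dθ dx M N : ℕ) (μ : ℝ)
    (φ : Fin M → EuclideanSpace ℝ (Fin dθ ⊕ Fin dx) → ℝ)
    (hφ : ∀ m, ConvexOn ℝ Set.univ
      (fun p : EuclideanSpace ℝ (Fin dθ ⊕ Fin dx) => φ m p - μ / 2 * ‖p‖ ^ 2)) :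
    ConvexOn ℝ Set.univ
      (fun q : EuclideanSpace ℝ (Fin dθ ⊕ (Fin M × Fin N) × Fin dx) =>
        bigPhi φ q - (M * N * μ) / 2 * ‖q‖ ^ 2) := by
  simp only [bigPhi_sub_eq_sum_blockMap]
  exact ConvexOn.sum convex_univ fun m _ => ConvexOn.sum convex_univ fun n _ =>
    (hφ m).comp_linearMap (blockMap _ m n)

/-- If each φ_m is μ-strongly convex jointly in (θ, x), then
Φ(θ, z) = Σ_{m,n} φ_m(θ, √(MN) z^{m,n}) is (MNμ)-strongly convex. -/
theorem stmt0 (dθ dx M N : ℕ) (hM : 1 ≤ M) (hN : 1 ≤ N) (μ : ℝ) (hμ : 0 < μ)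
    (φ : Fin M → EuclideanSpace ℝ (Fin dθ ⊕ Fin dx) → ℝ)
    (hφ : ∀ m, ConvexOn ℝ Set.univ
      (fun p : EuclideanSpace ℝ (Fin dθ ⊕ Fin dx) => φ m p - μ / 2 * ‖p‖ ^ 2)) :
    ConvexOn ℝ Set.univ
      (fun q : EuclideanSpace ℝ (Fin dθ ⊕ (Fin M × Fin N) × Fin dx) =>
        bigPhi φ q - (M * N * μ) / 2 * ‖q‖ ^ 2) :=
  stmt0_general dθ dx M N μ φ hφ
end

section
/- Let V : ℝ^d → ℝ be continuous and μ-strongly convex for some μ > 0, let x* ∈ ℝ^d be its (unique) global minimizer, and let π be the probability measure on ℝ^d with density proportional to exp(−V) with respect to Lebesgue measure (exp(−V) is integrable because V is strongly convex and continuous). Then ∫_{ℝ^d} ‖x − x*‖² dπ(x) ≤ d/μ. Equivalently, the Wasserstein-2 distance between the Dirac mass at x* and π is at most √(d/μ). -/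
/-!
Strong convexity and minimality at `x₀` give, for `t ≥ 1`,
`f (x₀ + t • (x - x₀)) ≥ f x + m / 2 * (t ^ 2 - 1) * ‖x - x₀‖ ^ 2`.
Since dilating about `x₀` by `t` multiplies `Z = ∫ e^{-f}` by `t^{-d}`, this yields
`t^{-d} Z ≤ ∫ e^{-f x - m / 2 * (t ^ 2 - 1) * ‖x - x₀‖ ^ 2} dx`, with equality at `t = 1`.
Comparing right derivatives at `t = 1` gives `-d Z ≤ -m ∫ ‖x - x₀‖² e^{-f}`; bounding
`e^{-a} ≤ 1 - a + a ^ 2` makes the right side a polynomial in `t` (with fourth-moment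
coefficient), so no differentiation under the integral sign is needed.
This replaces the usual integration by parts `∫ ⟪∇f x, x - x₀⟫ e^{-f x} dx = d Z`,
so `f` need not be differentiable.
-/

open Real MeasureTheory Set Filter Topology Module

theorem Real.exp_neg_le_one_sub_add_sq {a : ℝ} (ha : 0 ≤ a) : exp (-a) ≤ 1 - a + a ^ 2 := by
  rw [exp_neg, inv_le_iff_one_le_mul₀ (exp_pos a)]
  calc (1 : ℝ) ≤ (1 - a + a ^ 2) * (a + 1) := by nlinarith [pow_nonneg ha 3]
    _ ≤ (1 - a + a ^ 2) * exp a := by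
      gcongr
      · nlinarith
      · exact add_one_le_exp a

theorem HasDerivAt.nonneg_of_isMinOn_Ici {g : ℝ → ℝ} {g' a : ℝ} (hg : HasDerivAt g g' a)
    (hmin : IsMinOn g (Ici a) a) : 0 ≤ g' := by
  refine ge_of_tendsto hg.tendsto_slope_zero_right (eventually_nhdsWithin_of_forall ?_)
  intro h (hh : 0 < h)
  exact smul_nonneg (inv_nonneg.2 hh.le) (sub_nonneg.2 (hmin (by simp [hh.le])))

theorem MeasureTheory.Measure.integral_comp_homothety {E F : Type*} [NormedAddCommGroup E]
    [NormedSpace ℝ E] [MeasurableSpace E] [BorelSpace E] [FiniteDimensional ℝ E]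
    [NormedAddCommGroup F] [NormedSpace ℝ F] (ν : Measure E) [ν.IsAddHaarMeasure]
    (g : E → F) (c : E) (t : ℝ) :
    ∫ x, g (AffineMap.homothety c t x) ∂ν = |(t ^ finrank ℝ E)⁻¹| • ∫ x, g x ∂ν := by
  simp only [AffineMap.homothety_apply, vsub_eq_sub, vadd_eq_add]
  rw [integral_sub_right_eq_self (fun x => g (t • x + c)) c,
    ν.integral_comp_smul (fun x => g (x + c)) t, integral_add_right_eq_self g c]

section StrongConvexity

variable {E : Type*} [NormedAddCommGroup E] [NormedSpace ℝ E] {f : E → ℝ} {m : ℝ} {x₀ : E}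

theorem StrongConvexOn.add_mul_sq_norm_sub_le_of_isMinOn (hf : StrongConvexOn univ m f)
    (hmin : IsMinOn f univ x₀) (x : E) : f x₀ + m / 2 * ‖x - x₀‖ ^ 2 ≤ f x := by
  -- Minimality at the point `(1 - s) • x₀ + s • x` of the chord, then `s → 0`.
  have hchord : ∀ s ∈ Ioo (0 : ℝ) 1,
      (1 - s) * (m / 2 * ‖x - x₀‖ ^ 2) ≤ f x - f x₀ := by
    rintro s ⟨hs₀, hs₁⟩
    have hconv := hf.2 (mem_univ x₀) (mem_univ x) (by linarith : 0 ≤ 1 - s) hs₀.le (by ring)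
    have hle : f x₀ ≤ f ((1 - s) • x₀ + s • x) := hmin (mem_univ _)
    rw [← norm_neg, neg_sub] at hconv
    simp only [smul_eq_mul] at hconv
    refine le_of_mul_le_mul_left ?_ hs₀
    linear_combination hconv + hle
  have hlim : Tendsto (fun s : ℝ => (1 - s) * (m / 2 * ‖x - x₀‖ ^ 2)) (𝓝[>] 0)
      (𝓝 (m / 2 * ‖x - x₀‖ ^ 2)) := by
    have : Tendsto (fun s : ℝ => (1 - s) * (m / 2 * ‖x - x₀‖ ^ 2)) (𝓝 0)
        (𝓝 ((1 - 0) * (m / 2 * ‖x - x₀‖ ^ 2))) :=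
      ((continuous_const.sub continuous_id).mul continuous_const).tendsto 0
    simpa using this.mono_left nhdsWithin_le_nhds
  have := le_of_tendsto hlim (eventually_of_mem (Ioo_mem_nhdsGT one_pos) hchord)
  linarith

theorem StrongConvexOn.add_mul_sq_norm_sub_le_apply_homothety (hf : StrongConvexOn univ m f)
    (hmin : IsMinOn f univ x₀) {t : ℝ} (ht : 1 ≤ t) (x : E) :
    f x + m / 2 * (t ^ 2 - 1) * ‖x - x₀‖ ^ 2 ≤ f (AffineMap.homothety x₀ t x) := by
  set y := AffineMap.homothety x₀ t x
  have ht₀ : 0 < t := by linarith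
  have hy : y = t • (x - x₀) + x₀ := AffineMap.homothety_apply x₀ t x
  have hx : (1 - t⁻¹) • x₀ + t⁻¹ • y = x := by
    rw [hy, smul_add, smul_smul, inv_mul_cancel₀ ht₀.ne', one_smul, sub_smul, one_smul]
    abel
  have hdist : ‖x₀ - y‖ = t * ‖x - x₀‖ := by
    rw [hy, ← norm_neg, neg_sub, add_sub_cancel_right, norm_smul, norm_of_nonneg ht₀.le]
  have hconv := hf.2 (mem_univ x₀) (mem_univ y) (sub_nonneg.2 (inv_le_one_of_one_le₀ ht))
    (inv_nonneg.2 ht₀.le) (by ring)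
  rw [hx, hdist] at hconv
  simp only [smul_eq_mul] at hconv
  have hgrowth := hf.add_mul_sq_norm_sub_le_of_isMinOn hmin x
  have hscaled :
      t * f x ≤ (t - 1) * f x₀ + f y - (t - 1) * t * (m / 2 * ‖x - x₀‖ ^ 2) := by
    have := mul_le_mul_of_nonneg_left hconv ht₀.le
    field_simp at this
    linear_combination (1 / 2) * this
  nlinarith

theorem StrongConvexOn.exp_neg_apply_homothety_le (hm : 0 ≤ m) (hf : StrongConvexOn univ m f)
    (hmin : IsMinOn f univ x₀) {t : ℝ} (ht : 1 ≤ t) (x : E) :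
    exp (-f (AffineMap.homothety x₀ t x)) ≤
      exp (-f x) * (1 - m / 2 * (t ^ 2 - 1) * ‖x - x₀‖ ^ 2
        + (m / 2 * (t ^ 2 - 1) * ‖x - x₀‖ ^ 2) ^ 2) := by
  have hs : 0 ≤ m / 2 * (t ^ 2 - 1) := by have := one_le_pow₀ (n := 2) ht; positivity
  calc exp (-f (AffineMap.homothety x₀ t x))
      ≤ exp (-f x) * exp (-(m / 2 * (t ^ 2 - 1) * ‖x - x₀‖ ^ 2)) := by
        rw [← exp_add, exp_le_exp]
        linarith [hf.add_mul_sq_norm_sub_le_apply_homothety hmin ht x]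
    _ ≤ _ := by
        gcongr
        exact exp_neg_le_one_sub_add_sq (by positivity)

end StrongConvexity

section InnerProductSpace

variable {E : Type*} [NormedAddCommGroup E] [InnerProductSpace ℝ E] [FiniteDimensional ℝ E]
  [MeasurableSpace E] [BorelSpace E] {f : E → ℝ} {m : ℝ} {x₀ : E}

theorem integrable_exp_neg_mul_sq_norm {b : ℝ} (hb : 0 < b) :
    Integrable (fun x : E => exp (-b * ‖x‖ ^ 2)) := by
  refine Integrable.of_integral_ne_zero ?_
  rw [GaussianFourier.integral_rexp_neg_mul_sq_norm hb]
  positivity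

theorem integrable_sq_norm_sub_pow_mul_exp_neg {c : ℝ} (hc : 0 < c)
    (hcont : Continuous f) (hgrowth : ∀ x, f x₀ + c * ‖x - x₀‖ ^ 2 ≤ f x) (k : ℕ) :
    Integrable (fun x => (‖x - x₀‖ ^ 2) ^ k * exp (-f x)) := by
  have hc₂ : 0 < c / 2 := half_pos hc
  have hgauss := ((integrable_exp_neg_mul_sq_norm hc₂).comp_sub_right x₀).const_mul
    (k.factorial / (c / 2) ^ k * exp (-f x₀))
  refine hgauss.mono' (by fun_prop) (Eventually.of_forall fun x => ?_)
  set r := ‖x - x₀‖ ^ 2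
  have hr : 0 ≤ r := by positivity
  -- `u ^ k ≤ k! e ^ u` with `u = c r / 2` trades the polynomial factor for half the decay.
  have hpow : r ^ k ≤ k.factorial / (c / 2) ^ k * exp (c / 2 * r) := by
    have := pow_div_factorial_le_exp (c / 2 * r) (by positivity) k
    rw [div_le_iff₀ (by positivity), mul_pow] at this
    rw [div_mul_eq_mul_div, le_div_iff₀ (by positivity)]
    linarith
  rw [norm_of_nonneg (by positivity)]
  calc r ^ k * exp (-f x)
      ≤ (k.factorial / (c / 2) ^ k * exp (c / 2 * r)) * exp (-f x₀ - c * r) := by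
        gcongr
        linarith [hgrowth x]
    _ = k.factorial / (c / 2) ^ k * exp (-f x₀) * exp (-(c / 2) * r) := by
        rw [mul_assoc, ← exp_add, mul_assoc, ← exp_add]
        ring_nf

theorem StrongConvexOn.integral_exp_neg_le_dilation (hm : 0 < m) (hf : StrongConvexOn univ m f)
    (hcont : Continuous f) (hmin : IsMinOn f univ x₀) {t : ℝ} (ht : 1 ≤ t) :
    ∫ x, exp (-f x) ≤ t ^ finrank ℝ E * ((∫ x, exp (-f x))
      - m / 2 * (t ^ 2 - 1) * (∫ x, ‖x - x₀‖ ^ 2 * exp (-f x))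
      + (m / 2 * (t ^ 2 - 1)) ^ 2 * ∫ x, (‖x - x₀‖ ^ 2) ^ 2 * exp (-f x)) := by
  have hint := integrable_sq_norm_sub_pow_mul_exp_neg (half_pos hm) hcont
    (hf.add_mul_sq_norm_sub_le_of_isMinOn hmin)
  have hZ : Integrable (fun x => exp (-f x)) := by simpa using hint 0
  have hM₂ : Integrable (fun x => ‖x - x₀‖ ^ 2 * exp (-f x)) := by simpa using hint 1
  have hpt := hf.exp_neg_apply_homothety_le hm.le hmin ht
  set s := m / 2 * (t ^ 2 - 1)
  have hZM₂ : Integrable fun x => exp (-f x) - s * (‖x - x₀‖ ^ 2 * exp (-f x)) :=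
    hZ.sub (hM₂.const_mul s)
  have hM₄ : Integrable fun x => s ^ 2 * ((‖x - x₀‖ ^ 2) ^ 2 * exp (-f x)) :=
    (hint 2).const_mul _
  have hmono := integral_mono_of_nonneg (Eventually.of_forall fun x => (exp_pos _).le)
    (hZM₂.add hM₄)
    (Eventually.of_forall fun x => (hpt x).trans_eq (by simp only [Pi.add_apply]; ring))
  rw [volume.integral_comp_homothety (fun x => exp (-f x)), integral_add' hZM₂ hM₄,
    integral_sub hZ (hM₂.const_mul s), integral_const_mul, integral_const_mul,
    abs_of_pos (by positivity), smul_eq_mul] at hmono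
  calc ∫ x, exp (-f x) = t ^ finrank ℝ E * ((t ^ finrank ℝ E)⁻¹ * ∫ x, exp (-f x)) := by
        field_simp
    _ ≤ _ := by gcongr

theorem StrongConvexOn.integral_sq_norm_sub_mul_exp_neg_le (hm : 0 < m)
    (hf : StrongConvexOn univ m f) (hcont : Continuous f) (hmin : IsMinOn f univ x₀) :
    ∫ x, ‖x - x₀‖ ^ 2 * exp (-f x) ≤ (finrank ℝ E / m) * ∫ x, exp (-f x) := by
  set d := finrank ℝ E
  set Z := ∫ x, exp (-f x)
  set M₂ := ∫ x, ‖x - x₀‖ ^ 2 * exp (-f x)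
  set M₄ := ∫ x, (‖x - x₀‖ ^ 2) ^ 2 * exp (-f x)
  set g : ℝ → ℝ :=
    fun t => t ^ d * (Z - m / 2 * (t ^ 2 - 1) * M₂ + (m / 2 * (t ^ 2 - 1)) ^ 2 * M₄)
  have hg : HasDerivAt g (d * Z - m * M₂) 1 := by
    have hs : HasDerivAt (fun t : ℝ => m / 2 * (t ^ 2 - 1)) m 1 :=
      (((hasDerivAt_pow 2 (1 : ℝ)).sub_const 1).const_mul (m / 2)).congr_deriv (by norm_num)
    exact ((hasDerivAt_pow d (1 : ℝ)).mul (((hs.mul_const M₂).const_sub Z).add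
      ((hs.pow 2).mul_const M₄))).congr_deriv (by simp [sub_eq_add_neg])
  have := hg.nonneg_of_isMinOn_Ici fun t ht => by
    simpa [g] using hf.integral_exp_neg_le_dilation hm hcont hmin ht
  rw [div_mul_eq_mul_div, le_div_iff₀ hm]
  linarith

end InnerProductSpace

/-- Moment bound for strongly log-concave measures: if V is continuous,
μ-strongly convex with global minimizer x*, and π ∝ exp(−V), then
∫ ‖x − x*‖² dπ(x) ≤ d/μ, i.e. W₂(δ_{x*}, π) ≤ √(d/μ). Stated in unnormalised
form: ∫ ‖x − x*‖² exp(−V x) dx ≤ (d/μ) ∫ exp(−V x) dx. -/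
theorem stmt5 (d : ℕ) (μ : ℝ) (hμ : 0 < μ)
    (V : EuclideanSpace ℝ (Fin d) → ℝ) (hVcont : Continuous V)
    (hVconv : ConvexOn ℝ Set.univ
      (fun x : EuclideanSpace ℝ (Fin d) => V x - μ / 2 * ‖x‖ ^ 2))
    (xstar : EuclideanSpace ℝ (Fin d)) (hmin : ∀ x, V xstar ≤ V x) :
    (∫ x : EuclideanSpace ℝ (Fin d), ‖x - xstar‖ ^ 2 * Real.exp (-(V x)))
      ≤ ((d : ℝ) / μ) * ∫ x : EuclideanSpace ℝ (Fin d), Real.exp (-(V x)) := by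
  simpa only [finrank_euclideanSpace_fin] using
    (strongConvexOn_iff_convex.2 hVconv).integral_sq_norm_sub_mul_exp_neg_le hμ hVcont
      (isMinOn_univ_iff.2 hmin)
end

section
/- Let (x_k)_{k≥0} be a sequence of nonnegative real numbers, and let A ∈ (0, 1), B > 0, C ≥ 0 be constants such that for every k ≥ 0, x_{k+1}² ≤ ((1 − A)·x_k + C)² + B². Then for every K ≥ 0, x_K ≤ (1 − A)^K · x_0 + C/A + B²/(C + √A · B). -/
/-!
The comparison sequence `y_k = (1 - A)^k x_0 + D`, with `D = C/A + B²/(C + √A B)`, is a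
supersolution of the recursion: `D` satisfies `((1 - A) D + C)² + B² ≤ D²` (the gap is
`B² (C² + A (1 - A) B²) / (C + √A B)²`), and since `(1 - A) D + C ≤ D` this survives adding the
nonnegative term `(1 - A)^(k+1) x_0` to both sides. Because `u ↦ ((1 - A) u + C)² + B²` is
monotone on `[0, ∞)`, induction gives `x_k ≤ y_k`.
-/

open Real

theorem seq_le_seq_of_sq_le_sq_add_sq {a B C : ℝ} (ha : 0 ≤ a) (hC : 0 ≤ C) {x y : ℕ → ℝ}
    (hx : ∀ k, 0 ≤ x k) (hy : ∀ k, 0 ≤ y k)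
    (hxrec : ∀ k, x (k + 1) ^ 2 ≤ (a * x k + C) ^ 2 + B ^ 2)
    (hyrec : ∀ k, (a * y k + C) ^ 2 + B ^ 2 ≤ y (k + 1) ^ 2) (h₀ : x 0 ≤ y 0) :
    ∀ k, x k ≤ y k := by
  intro k
  induction k with
  | zero => exact h₀
  | succ k ih =>
    have hmono : (a * x k + C) ^ 2 ≤ (a * y k + C) ^ 2 := by
      gcongr
      · exact add_nonneg (mul_nonneg ha (hx k)) hC
    have hsq : x (k + 1) ^ 2 ≤ y (k + 1) ^ 2 := by linarith [hxrec k, hyrec k]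
    exact (pow_le_pow_iff_left₀ (hx _) (hy _) two_ne_zero).1 hsq

theorem add_sq_add_sq_le_add_sq {t E D B : ℝ} (ht : 0 ≤ t) (hED : E ≤ D)
    (h : E ^ 2 + B ^ 2 ≤ D ^ 2) : (t + E) ^ 2 + B ^ 2 ≤ (t + D) ^ 2 := by
  nlinarith [mul_le_mul_of_nonneg_left hED ht]

noncomputable def recursionBound (A B C : ℝ) : ℝ := C / A + B ^ 2 / (C + √A * B)

section recursionBound

variable {A B C : ℝ}

theorem le_mul_recursionBound (hA : 0 < A) (hB : 0 ≤ B) (hC : 0 ≤ C) :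
    C ≤ A * recursionBound A B C := by
  rw [recursionBound, mul_add, mul_div_cancel₀ _ hA.ne']
  have : 0 ≤ A * (B ^ 2 / (C + √A * B)) := by positivity
  linarith

theorem sq_add_sq_le_sq_recursionBound (hA0 : 0 < A) (hA1 : A ≤ 1) (hB : 0 < B) (hC : 0 ≤ C) :
    ((1 - A) * recursionBound A B C + C) ^ 2 + B ^ 2 ≤ recursionBound A B C ^ 2 := by
  have hQ : 0 < C + √A * B := by positivity
  have gap : recursionBound A B C ^ 2 - (((1 - A) * recursionBound A B C + C) ^ 2 + B ^ 2)
      = B ^ 2 * (C ^ 2 + A * (1 - A) * B ^ 2) / (C + √A * B) ^ 2 := by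
    obtain ⟨s, hs, rfl⟩ : ∃ s, 0 < s ∧ A = s ^ 2 := ⟨√A, sqrt_pos.2 hA0, (sq_sqrt hA0.le).symm⟩
    rw [recursionBound, sqrt_sq hs.le] at *
    field_simp
    ring
  have : 0 ≤ B ^ 2 * (C ^ 2 + A * (1 - A) * B ^ 2) / (C + √A * B) ^ 2 := by
    have : 0 ≤ 1 - A := by linarith
    positivity
  linarith

end recursionBound

/-- Recursion lemma (Lemma 1 of Dalalyan 2019): if x_{k+1}² ≤ ((1−A)x_k + C)² + B²
with A ∈ (0,1), B > 0, C ≥ 0 and x_k ≥ 0, then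
x_K ≤ (1−A)^K x_0 + C/A + B²/(C + √A·B). -/
theorem stmt8 (x : ℕ → ℝ) (hx : ∀ k, 0 ≤ x k)
    (A B C : ℝ) (hA0 : 0 < A) (hA1 : A < 1) (hB : 0 < B) (hC : 0 ≤ C)
    (hrec : ∀ k, (x (k + 1)) ^ 2 ≤ ((1 - A) * x k + C) ^ 2 + B ^ 2) :
    ∀ K : ℕ, x K ≤ (1 - A) ^ K * x 0 + C / A + B ^ 2 / (C + Real.sqrt A * B) := by
  set D := recursionBound A B C
  have ha : 0 ≤ 1 - A := by linarith
  have hD : 0 ≤ D := by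
    unfold D recursionBound
    positivity
  have hy : ∀ k, 0 ≤ (1 - A) ^ k * x 0 + D := fun k => by
    have := hx 0
    positivity
  have hyrec : ∀ k, ((1 - A) * ((1 - A) ^ k * x 0 + D) + C) ^ 2 + B ^ 2
      ≤ ((1 - A) ^ (k + 1) * x 0 + D) ^ 2 := fun k => by
    have hshift := add_sq_add_sq_le_add_sq (t := (1 - A) ^ (k + 1) * x 0)
      (mul_nonneg (pow_nonneg ha _) (hx 0))
      (by linarith [le_mul_recursionBound hA0 hB.le hC])
      (sq_add_sq_le_sq_recursionBound hA0 hA1.le hB hC)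
    convert hshift using 3
    ring
  intro K
  rw [add_assoc]
  exact seq_le_seq_of_sq_le_sq_add_sq ha hC hx hy hrec hyrec (by simpa using hD) K
end
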